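/- arXiv:1501.01541 — 6 statements merged into one kernel-verified Lean document; each statement's English description precedes it below -/
import Mathlib

section
/- Fix ε > 0, a_ε = (√(1+4ε) − 1)/2, μ_ε(s) = max{s(1−s)+ε, ε}, and let f_ε be the regularized potential. Then there exists a constant c'_ε ≥ 0, depending only on ε, such that f_ε(s) ≥ ((1 + a_ε)/(2ε))·(s − 1/2)² − c'_ε for every s ∈ ℝ. -/
/-!
`fε'' > 0`, so `fε` is convex with a critical point at `1/2` and `fε ≥ fε (1/2) = -log 2`.
Outside `[0, 1]` we have `με = ε`, so there `fε'' = (1 + 2aε)/ε`,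
and a second-order Taylor bound from the nearer endpoint gives `fε s ≥ -log 2 + (1 + 2aε)/(2ε) t²`
with `t` the signed distance from `s` to `[0, 1]`. Since `aε > 0` this coefficient exceeds
`(1 + aε)/(2ε)`, and the gap absorbs the bounded shift from `t` to `s - 1/2`.
-/

open Set Real

theorem ConvexOn.add_deriv_mul_sub_le {D : Set ℝ} {g : ℝ → ℝ} (hg : ConvexOn ℝ D g)
    {b s : ℝ} (hb : b ∈ D) (hs : s ∈ D) (hgb : DifferentiableAt ℝ g b) :
    g b + deriv g b * (s - b) ≤ g s := by
  rcases lt_trichotomy b s with hbs | rfl | hsb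
  · have := hg.deriv_le_slope hb hs hbs hgb
    rw [slope_def_field, le_div_iff₀ (sub_pos.2 hbs)] at this
    linarith
  · simp
  · have := hg.slope_le_deriv hs hb hsb hgb
    rw [slope_def_field, div_le_iff₀ (sub_pos.2 hsb)] at this
    linarith

theorem quadratic_taylor_le_of_le_deriv_deriv {f : ℝ → ℝ} (hf : Differentiable ℝ f)
    (hf' : Differentiable ℝ (deriv f)) {D : Set ℝ} (hD : Convex ℝ D) {m : ℝ}
    (hm : ∀ x ∈ interior D, m ≤ deriv (deriv f) x) {b s : ℝ} (hb : b ∈ D) (hs : s ∈ D) :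
    f b + deriv f b * (s - b) + m / 2 * (s - b) ^ 2 ≤ f s := by
  set g : ℝ → ℝ := fun x ↦ f x - m / 2 * (x - b) ^ 2
  have hg : ∀ x, HasDerivAt g (deriv f x - m * (x - b)) x := fun x ↦
    ((hf x).hasDerivAt.fun_sub
      ((((hasDerivAt_id' x).sub_const b).fun_pow 2).const_mul (m / 2))).congr_deriv (by ring)
  have hg' : ∀ x, HasDerivAt (fun x ↦ deriv f x - m * (x - b)) (deriv (deriv f) x - m) x :=
    fun x ↦ ((hf' x).hasDerivAt.fun_sub
        (((hasDerivAt_id' x).sub_const b).const_mul m)).congr_deriv (by ring)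
  have hconv : ConvexOn ℝ D g :=
    convexOn_of_hasDerivWithinAt2_nonneg hD
      (continuous_iff_continuousAt.2 fun x ↦ (hg x).continuousAt).continuousOn
      (fun x _ ↦ (hg x).hasDerivWithinAt) (fun x _ ↦ (hg' x).hasDerivWithinAt)
      (fun x hx ↦ sub_nonneg.2 (hm x hx))
  have := hconv.add_deriv_mul_sub_le hb hs (hg b).differentiableAt
  simp only [g, (hg b).deriv, sub_self] at this
  linarith

theorem mul_add_sq_le_of_lt {A B : ℝ} (hAB : A < B) (t c : ℝ) :
    A * (t + c) ^ 2 ≤ B * t ^ 2 + A * B / (B - A) * c ^ 2 := by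
  have hBA : 0 < B - A := sub_pos.2 hAB
  have hgap : B * t ^ 2 + A * B / (B - A) * c ^ 2 - A * (t + c) ^ 2
      = ((B - A) * t - A * c) ^ 2 / (B - A) := by
    field_simp; ring
  rw [← sub_nonneg, hgap]
  exact div_nonneg (sq_nonneg _) hBA.le

theorem sqrt_one_add_four_mul_sub_one_pos {ε : ℝ} (hε : 0 < ε) : 0 < √(1 + 4 * ε) - 1 := by
  rw [sub_pos, lt_sqrt zero_le_one]
  linarith

theorem max_mul_one_sub_add_eq_right {s : ℝ} (hs : s ≤ 0 ∨ 1 ≤ s) (ε : ℝ) :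
    max (s * (1 - s) + ε) ε = ε := by
  refine max_eq_right ?_
  rcases hs with hs | hs <;> nlinarith

/-- quadratic lower bound for `f_ε` centered at `1/2`. -/
theorem regularized_potential_quadratic_lower_bound_centered (ε : ℝ) (hε : 0 < ε)
    (aε : ℝ) (haε : aε = (Real.sqrt (1 + 4 * ε) - 1) / 2)
    (με : ℝ → ℝ) (hμε : ∀ s : ℝ, με s = max (s * (1 - s) + ε) ε)
    (fε : ℝ → ℝ) (hreg : ContDiff ℝ 2 fε)
    (hf'' : ∀ s : ℝ, deriv (deriv fε) s = (1 + 2 * aε) / με s)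
    (hf' : deriv fε (1/2) = 0) (hf : fε (1/2) = - Real.log 2) :
    ∃ c' : ℝ, 0 ≤ c' ∧
      ∀ s : ℝ, (1 + aε) / (2 * ε) * (s - 1/2) ^ 2 - c' ≤ fε s := by
  have ha : 0 < aε := by rw [haε]; linarith [sqrt_one_add_four_mul_sub_one_pos hε]
  set m := (1 + 2 * aε) / ε
  have hf₁ : Differentiable ℝ fε := hreg.differentiable two_ne_zero
  have hf₂ : Differentiable ℝ (deriv fε) := hreg.differentiable_deriv_two
  have hf''_nonneg : ∀ s, 0 ≤ deriv (deriv fε) s := fun s ↦ by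
    rw [hf'', hμε]; exact div_nonneg (by linarith) (hε.le.trans (le_max_right _ _))
  have hf''_outside : ∀ s, s ≤ 0 ∨ 1 ≤ s → deriv (deriv fε) s = m := fun s hs ↦ by
    rw [hf'', hμε, max_mul_one_sub_add_eq_right hs]
  have hmin : ∀ s, -Real.log 2 ≤ fε s := fun s ↦ by
    have htaylor := quadratic_taylor_le_of_le_deriv_deriv hf₁ hf₂ convex_univ
      (fun x _ ↦ hf''_nonneg x) (mem_univ (1 / 2)) (mem_univ s)
    rw [hf, hf'] at htaylor
    linarith
  have hmono : Monotone (deriv fε) := monotone_of_deriv_nonneg hf₂ hf''_nonneg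
  -- `t` is the signed distance from `s` to `[0, 1]`
  have key : ∀ s, ∃ t, (s - 1 / 2 - t) ^ 2 ≤ 1 / 4 ∧ -Real.log 2 + m / 2 * t ^ 2 ≤ fε s := by
    intro s
    rcases le_or_gt s 0 with hs | hs
    · have htaylor := quadratic_taylor_le_of_le_deriv_deriv hf₁ hf₂ (convex_Iic 0)
        (fun x hx ↦ (hf''_outside x (.inl (interior_Iic.subset hx).le)).ge) self_mem_Iic hs
      have hd : deriv fε 0 ≤ 0 := (hmono (by norm_num : (0 : ℝ) ≤ 1 / 2)).trans_eq hf'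
      exact ⟨s, by norm_num, by nlinarith [hmin 0]⟩
    rcases le_or_gt 1 s with hs1 | hs1
    · have htaylor := quadratic_taylor_le_of_le_deriv_deriv hf₁ hf₂ (convex_Ici 1)
        (fun x hx ↦ (hf''_outside x (.inr (interior_Ici.subset hx).le)).ge) self_mem_Ici hs1
      have hd : 0 ≤ deriv fε 1 := hf'.symm.trans_le (hmono (by norm_num))
      exact ⟨s - 1, by norm_num, by nlinarith [hmin 1]⟩
    · exact ⟨0, by nlinarith, by simpa using hmin s⟩
  set A := (1 + aε) / (2 * ε)
  have hAB : A < m / 2 := by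
    rw [div_div, mul_comm ε]
    exact div_lt_div_of_pos_right (by linarith) (by positivity)
  set K := A * (m / 2) / (m / 2 - A)
  have hK : 0 ≤ K := div_nonneg (by positivity) (sub_pos.2 hAB).le
  refine ⟨Real.log 2 + K / 4, by positivity, fun s ↦ ?_⟩
  obtain ⟨t, hc, ht⟩ := key s
  have hquad := mul_add_sq_le_of_lt hAB t (s - 1 / 2 - t)
  rw [add_sub_cancel] at hquad
  nlinarith [mul_le_mul_of_nonneg_left hc hK]
end

section
/- Fix ε > 0, a_ε = (√(1+4ε) − 1)/2, μ_ε(s) = max{s(1−s)+ε, ε}, and let f_ε be the regularized potential. Then there exists a constant c_ε ≥ 0, depending only on ε, such that f_ε(s) ≥ s²/(2ε) − c_ε for every s ∈ ℝ. -/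
/-!
Outside `[0, 1]` the mobility `μ_ε` equals `ε`, so there `f_ε'' = K := (1 + 2 a_ε) / ε`, while
`f_ε'' > 0` everywhere; hence `f_ε''(s) ≥ K - (5K/4) / (1 + (s - 1/2)²)`. Comparing second
derivatives with an explicit primitive of the right-hand side from `s = 1/2` gives
`f_ε(s) ≥ -log 2 + K (s - 1/2)² / 2 - (5Kπ/8) |s - 1/2|`. Since `K = 1/ε + 2 a_ε / ε` with
`a_ε > 0`, the surplus `(a_ε / ε) (s - 1/2)²` absorbs every term of linear growth.
-/

open Real Set

noncomputable def arctanPrimitive (x : ℝ) : ℝ := x * arctan x - log (1 + x ^ 2) / 2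

theorem hasDerivAt_arctanPrimitive (x : ℝ) : HasDerivAt arctanPrimitive (arctan x) x := by
  have hpos : 0 < 1 + x ^ 2 := by positivity
  have hlog : HasDerivAt (fun y => log (1 + y ^ 2)) (2 * x / (1 + x ^ 2)) x := by
    simpa using ((hasDerivAt_pow 2 x).const_add 1).log hpos.ne'
  refine (((hasDerivAt_id' x).mul (hasDerivAt_arctan x)).sub (hlog.div_const 2)).congr_deriv ?_
  field_simp
  ring

theorem arctanPrimitive_le (x : ℝ) : arctanPrimitive x ≤ π / 2 * |x| := by
  have harctan : x * arctan x ≤ π / 2 * |x| := by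
    calc x * arctan x ≤ |x| * |arctan x| := by rw [← abs_mul]; exact le_abs_self _
      _ ≤ |x| * (π / 2) := by
        gcongr
        exact abs_le.2 ⟨(neg_pi_div_two_lt_arctan x).le, (arctan_lt_pi_div_two x).le⟩
      _ = π / 2 * |x| := mul_comm _ _
  have hlog : 0 ≤ log (1 + x ^ 2) := log_nonneg (by nlinarith)
  unfold arctanPrimitive
  linarith

theorem le_of_hasDerivAt_second_deriv_le {u u' u'' v v' v'' : ℝ → ℝ} {x₀ : ℝ}
    (hu : ∀ x, HasDerivAt u (u' x) x) (hu' : ∀ x, HasDerivAt u' (u'' x) x)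
    (hv : ∀ x, HasDerivAt v (v' x) x) (hv' : ∀ x, HasDerivAt v' (v'' x) x)
    (h'' : ∀ x, u'' x ≤ v'' x) (h₀ : u x₀ ≤ v x₀) (h₁ : u' x₀ = v' x₀) (x : ℝ) :
    u x ≤ v x := by
  have hd : ∀ y, HasDerivAt (v - u) (v' y - u' y) y := fun y => (hv y).sub (hu y)
  have hmono : Monotone fun y => v' y - u' y :=
    monotone_of_hasDerivAt_nonneg (fun y => (hv' y).sub (hu' y)) fun y => sub_nonneg.2 (h'' y)
  have hmin : IsMinOn (v - u) univ x₀ := by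
    refine isMinOn_univ_of_deriv (hd x₀).continuousAt
      (fun y _ => (hd y).differentiableAt.differentiableWithinAt)
      (fun y _ => (hd y).differentiableAt.differentiableWithinAt) (fun y hy => ?_) fun y hy => ?_
    · rw [(hd y).deriv]; linarith [hmono (le_of_lt (mem_Iio.1 hy))]
    · rw [(hd y).deriv]; linarith [hmono (le_of_lt (mem_Ioi.1 hy))]
  have hx : (v - u) x₀ ≤ (v - u) x := hmin (mem_univ x)
  simp only [Pi.sub_apply] at hx
  linarith

theorem taylor_lower_bound_of_sub_div_one_add_sq_le {f f' f'' : ℝ → ℝ} {x₀ K P : ℝ}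
    (hf : ∀ x, HasDerivAt f (f' x) x) (hf' : ∀ x, HasDerivAt f' (f'' x) x) (hP : 0 ≤ P)
    (h'' : ∀ x, K - P / (1 + (x - x₀) ^ 2) ≤ f'' x) (x : ℝ) :
    f x₀ + f' x₀ * (x - x₀) + K * (x - x₀) ^ 2 / 2 - P * (π / 2 * |x - x₀|) ≤ f x := by
  have hsub : ∀ y, HasDerivAt (fun y => y - x₀) 1 y := fun y => (hasDerivAt_id y).sub_const x₀
  have hu : ∀ y, HasDerivAt
      (fun y => f x₀ + f' x₀ * (y - x₀) + K * (y - x₀) ^ 2 / 2 - P * arctanPrimitive (y - x₀))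
      (f' x₀ + K * (y - x₀) - P * arctan (y - x₀)) y := by
    intro y
    refine (((((hsub y).const_mul (f' x₀)).const_add (f x₀)).fun_add
      ((((hsub y).fun_pow 2).const_mul K).div_const 2)).fun_sub
      (((hasDerivAt_arctanPrimitive (y - x₀)).comp_sub_const y x₀).const_mul P)).congr_deriv ?_
    ring
  have hu' : ∀ y, HasDerivAt (fun y => f' x₀ + K * (y - x₀) - P * arctan (y - x₀))
      (K - P / (1 + (y - x₀) ^ 2)) y := by
    intro y
    refine ((((hsub y).const_mul K).const_add (f' x₀)).fun_sub
      (((hasDerivAt_arctan (y - x₀)).comp_sub_const y x₀).const_mul P)).congr_deriv ?_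
    ring
  have hcmp := le_of_hasDerivAt_second_deriv_le (x₀ := x₀) hu hu' hf hf' h''
    (by simp [arctanPrimitive]) (by simp) x
  have hP' := mul_le_mul_of_nonneg_left (arctanPrimitive_le (x - x₀)) hP
  linarith

theorem neg_sq_div_le_mul_sq_sub_mul {α : ℝ} (hα : 0 < α) (β t : ℝ) :
    -(β ^ 2 / (4 * α)) ≤ α * t ^ 2 - β * t := by
  have hsq : α * t ^ 2 - β * t + β ^ 2 / (4 * α) = (2 * α * t - β) ^ 2 / (4 * α) := by
    field_simp
    ring
  have hnonneg : 0 ≤ (2 * α * t - β) ^ 2 / (4 * α) := by positivity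
  linarith

theorem sub_div_one_add_sq_le_div_max {b ε : ℝ} (hb : 0 ≤ b) (hε : 0 < ε) (s : ℝ) :
    b / ε - 5 / 4 * (b / ε) / (1 + (s - 1 / 2) ^ 2) ≤ b / max (s * (1 - s) + ε) ε := by
  have hbε : 0 ≤ b / ε := div_nonneg hb hε.le
  rcases le_or_gt (s * (1 - s)) 0 with hs | hs
  · rw [max_eq_right (by linarith)]
    have hcorr : 0 ≤ 5 / 4 * (b / ε) / (1 + (s - 1 / 2) ^ 2) := by positivity
    linarith
  -- here `(s - 1/2)² < 1/4`, which is where the factor `5/4` comes from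
  · have hle : b / ε ≤ 5 / 4 * (b / ε) / (1 + (s - 1 / 2) ^ 2) := by
      rw [le_div_iff₀ (by positivity)]
      nlinarith
    have hpos : 0 ≤ b / max (s * (1 - s) + ε) ε :=
      div_nonneg hb (hε.le.trans (le_max_right _ _))
    linarith

/-- quadratic lower bound `f_ε(s) ≥ s²/(2ε) − c_ε`. -/
theorem regularized_potential_quadratic_lower_bound (ε : ℝ) (hε : 0 < ε)
    (aε : ℝ) (haε : aε = (Real.sqrt (1 + 4 * ε) - 1) / 2)
    (με : ℝ → ℝ) (hμε : ∀ s : ℝ, με s = max (s * (1 - s) + ε) ε)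
    (fε : ℝ → ℝ) (hreg : ContDiff ℝ 2 fε)
    (hf'' : ∀ s : ℝ, deriv (deriv fε) s = (1 + 2 * aε) / με s)
    (hf' : deriv fε (1/2) = 0) (hf : fε (1/2) = - Real.log 2) :
    ∃ c : ℝ, 0 ≤ c ∧ ∀ s : ℝ, s ^ 2 / (2 * ε) - c ≤ fε s := by
  have ha : 0 < aε := by
    have hsqrt : 1 < √(1 + 4 * ε) := (lt_sqrt zero_le_one).2 (by linarith)
    rw [haε]
    linarith
  set K := (1 + 2 * aε) / ε with hK
  have hlower :=
    taylor_lower_bound_of_sub_div_one_add_sq_le (x₀ := 1 / 2) (K := K) (P := 5 / 4 * K)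
    (fun s => (hreg.differentiable (by norm_num) s).hasDerivAt)
    (fun s => (hreg.differentiable_deriv_two s).hasDerivAt) (by positivity)
    (fun s => by rw [hf'', hμε]; exact sub_div_one_add_sq_le_div_max (by linarith) hε s)
  set β := 5 / 4 * K * (π / 2) + 1 / (2 * ε) with hβ
  refine ⟨β ^ 2 / (4 * (aε / ε)) + 1 / (8 * ε) + log 2, by positivity, fun s => ?_⟩
  have hquad := neg_sq_div_le_mul_sq_sub_mul (div_pos ha hε) β |s - 1 / 2|
  have hK2 : K * (s - 1 / 2) ^ 2 / 2 = (s - 1 / 2) ^ 2 / (2 * ε) + aε / ε * |s - 1 / 2| ^ 2 := by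
    rw [sq_abs, hK]; field_simp
  have hs2 :
      s ^ 2 / (2 * ε) = (s - 1 / 2) ^ 2 / (2 * ε) + (s - 1 / 2) / (2 * ε) + 1 / (8 * ε) := by
    field_simp; ring
  have habs : (s - 1 / 2) / (2 * ε) ≤ |s - 1 / 2| / (2 * ε) :=
    div_le_div_of_nonneg_right (le_abs_self _) (by positivity)
  have hβs : β * |s - 1 / 2| = 5 / 4 * K * (π / 2 * |s - 1 / 2|) + |s - 1 / 2| / (2 * ε) := by
    rw [hβ]; ring
  have hs := hlower s
  rw [hf, hf'] at hs
  linarith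
end

section
/- Fix ε > 0, a_ε = (√(1+4ε) − 1)/2, μ_ε(s) = max{s(1−s)+ε, ε}, and let f_ε be the regularized potential. Then f_ε(s) ≥ ((1 + 2a_ε)/(2ε))·(s − 1)² + f_ε(1) for every s ≥ 1, and f_ε(s) ≥ ((1 + 2a_ε)/(2ε))·s² + f_ε(0) for every s ≤ 0. -/
/-!
Outside `[0, 1]` the mobility `μ_ε` is the constant `ε`, so `f_ε''` equals `(1 + 2 a_ε) / ε`
there. Since `f_ε'' ≥ 0` everywhere and `f_ε'(1/2) = 0`, we have `f_ε'(0) ≤ 0 ≤ f_ε'(1)`.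
Integrating `f'' ≥ c` twice away from a point `a` at which `f'` points outwards gives
`f(x) ≥ f(a) + c (x - a)² / 2`.
-/

open Set

theorem hasDerivAt_sub_half_mul_sq {f : ℝ → ℝ} {x : ℝ} (hf : DifferentiableAt ℝ f x)
    (a c : ℝ) :
    HasDerivAt (fun y => f y - c / 2 * (y - a) ^ 2) (deriv f x - c * (x - a)) x :=
  (hf.hasDerivAt.fun_sub
    ((((hasDerivAt_id' x).sub_const a).fun_pow 2).const_mul (c / 2))).congr_deriv
    (by norm_num; ring)

section QuadraticGrowth

variable {f : ℝ → ℝ} {a c : ℝ}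

theorem half_mul_sq_add_le_of_le_deriv_deriv_Ici (hf : Differentiable ℝ f)
    (hf' : Differentiable ℝ (deriv f)) (hc : ∀ x, a < x → c ≤ deriv (deriv f) x)
    (ha : 0 ≤ deriv f a) {x : ℝ} (hx : a ≤ x) :
    c / 2 * (x - a) ^ 2 + f a ≤ f x := by
  have hslope : ∀ y ∈ Ici a, c * (y - a) ≤ deriv f y := fun y hy => by
    have := (convex_Ici a).mul_sub_le_image_sub_of_le_deriv hf'.continuous.continuousOn
      hf'.differentiableOn (by simpa using hc) a self_mem_Ici y hy hy
    linarith
  have hmono : MonotoneOn (fun y => f y - c / 2 * (y - a) ^ 2) (Ici a) :=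
    monotoneOn_of_deriv_nonneg (convex_Ici a)
      (fun y _ => (hasDerivAt_sub_half_mul_sq (hf y) a c).continuousAt.continuousWithinAt)
      (fun y _ => (hasDerivAt_sub_half_mul_sq (hf y) a c).differentiableAt.differentiableWithinAt)
      (fun y hy => by
        rw [(hasDerivAt_sub_half_mul_sq (hf y) a c).deriv]
        linarith [hslope y (interior_subset hy)])
  simpa [le_sub_iff_add_le, add_comm] using hmono self_mem_Ici hx hx

theorem half_mul_sq_add_le_of_le_deriv_deriv_Iic (hf : Differentiable ℝ f)
    (hf' : Differentiable ℝ (deriv f)) (hc : ∀ x, x < a → c ≤ deriv (deriv f) x)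
    (ha : deriv f a ≤ 0) {x : ℝ} (hx : x ≤ a) :
    c / 2 * (x - a) ^ 2 + f a ≤ f x := by
  have hslope : ∀ y ∈ Iic a, deriv f y ≤ c * (y - a) := fun y hy => by
    have := (convex_Iic a).mul_sub_le_image_sub_of_le_deriv hf'.continuous.continuousOn
      hf'.differentiableOn (by simpa using hc) y hy a self_mem_Iic hy
    linarith
  have hanti : AntitoneOn (fun y => f y - c / 2 * (y - a) ^ 2) (Iic a) :=
    antitoneOn_of_deriv_nonpos (convex_Iic a)
      (fun y _ => (hasDerivAt_sub_half_mul_sq (hf y) a c).continuousAt.continuousWithinAt)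
      (fun y _ => (hasDerivAt_sub_half_mul_sq (hf y) a c).differentiableAt.differentiableWithinAt)
      (fun y hy => by
        rw [(hasDerivAt_sub_half_mul_sq (hf y) a c).deriv]
        linarith [hslope y (interior_subset hy)])
  simpa [le_sub_iff_add_le, add_comm] using hanti hx self_mem_Iic hx

end QuadraticGrowth

theorem regularized_potential_outer_bounds_general (ε : ℝ) (hε : 0 < ε)
    (aε : ℝ) (haε : aε = (Real.sqrt (1 + 4 * ε) - 1) / 2)
    (με : ℝ → ℝ) (hμε : ∀ s : ℝ, με s = max (s * (1 - s) + ε) ε)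
    (fε : ℝ → ℝ) (hreg : ContDiff ℝ 2 fε)
    (hf'' : ∀ s : ℝ, deriv (deriv fε) s = (1 + 2 * aε) / με s)
    (hf' : deriv fε (1/2) = 0) :
    (∀ s : ℝ, 1 ≤ s → (1 + 2 * aε) / (2 * ε) * (s - 1) ^ 2 + fε 1 ≤ fε s) ∧
    (∀ s : ℝ, s ≤ 0 → (1 + 2 * aε) / (2 * ε) * s ^ 2 + fε 0 ≤ fε s) := by
  have hcoef : 0 ≤ 1 + 2 * aε := by rw [haε]; linarith [Real.sqrt_nonneg (1 + 4 * ε)]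
  have hf₁ : Differentiable ℝ fε := hreg.differentiable (by norm_num)
  have hf₂ : Differentiable ℝ (deriv fε) := hreg.differentiable_deriv_two
  have hmono : Monotone (deriv fε) := monotone_of_deriv_nonneg hf₂ fun s => by
    rw [hf'' s, hμε s]
    exact div_nonneg hcoef (hε.le.trans (le_max_right _ _))
  have hcurv : ∀ s, s * (1 - s) ≤ 0 → (1 + 2 * aε) / ε ≤ deriv (deriv fε) s :=
    fun s hs => by rw [hf'' s, hμε s, max_eq_right (by linarith)]
  rw [show (1 + 2 * aε) / (2 * ε) = (1 + 2 * aε) / ε / 2 by ring]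
  refine ⟨fun s hs => ?_, fun s hs => ?_⟩
  · exact half_mul_sq_add_le_of_le_deriv_deriv_Ici hf₁ hf₂
      (fun x hx => hcurv x (by nlinarith))
      (hf'.symm.trans_le (hmono (by norm_num : (1 / 2 : ℝ) ≤ 1))) hs
  · simpa using half_mul_sq_add_le_of_le_deriv_deriv_Iic (a := 0) hf₁ hf₂
      (fun x hx => hcurv x (by nlinarith))
      ((hmono (by norm_num : (0 : ℝ) ≤ 1 / 2)).trans_eq hf') hs

/-- quadratic lower bounds for `f_ε` outside `[0,1]`. -/
theorem regularized_potential_outer_bounds (ε : ℝ) (hε : 0 < ε)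
    (aε : ℝ) (haε : aε = (Real.sqrt (1 + 4 * ε) - 1) / 2)
    (με : ℝ → ℝ) (hμε : ∀ s : ℝ, με s = max (s * (1 - s) + ε) ε)
    (fε : ℝ → ℝ) (hreg : ContDiff ℝ 2 fε)
    (hf'' : ∀ s : ℝ, deriv (deriv fε) s = (1 + 2 * aε) / με s)
    (hf' : deriv fε (1/2) = 0) (hf : fε (1/2) = - Real.log 2) :
    (∀ s : ℝ, 1 ≤ s → (1 + 2 * aε) / (2 * ε) * (s - 1) ^ 2 + fε 1 ≤ fε s) ∧
    (∀ s : ℝ, s ≤ 0 → (1 + 2 * aε) / (2 * ε) * s ^ 2 + fε 0 ≤ fε s) :=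
  regularized_potential_outer_bounds_general ε hε aε haε με hμε fε hreg hf'' hf'
end

section
/- Fix ε > 0, a_ε = (√(1+4ε) − 1)/2, μ_ε(s) = max{s(1−s)+ε, ε}, and let f_ε be the regularized potential. Then for every s ∈ ℝ with s ≠ 0 and s ≠ 1, the second derivative f_ε'' is differentiable at s and |(f_ε'')'(s)| · μ_ε(s)² ≤ 1 + 2a_ε. -/
/-! Since `μ_ε(s) = max{s(1−s)+ε, ε}`, away from the kinks at `s = 0, 1` the mobility coincides
near `s` with one smooth branch: `s(1−s)+ε` on `(0,1)` and the constant `ε` outside `[0,1]`, so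
`μ_ε'(s)` is `1 − 2s` or `0`, of modulus at most `1`. Differentiating `f_ε'' = (1+2a_ε)/μ_ε` gives
`|f_ε'''| μ_ε² = (1+2a_ε)|μ_ε'| ≤ 1+2a_ε`. -/

section MaxDeriv

variable {f g : ℝ → ℝ} {f' g' x : ℝ}

theorem HasDerivAt.max_of_right_lt (hf : HasDerivAt f f' x) (hg : ContinuousAt g x)
    (hgf : g x < f x) : HasDerivAt (fun t => max (f t) (g t)) f' x :=
  hf.congr_of_eventuallyEq <| (hg.eventually_lt hf.continuousAt hgf).mono fun _ ht =>
    max_eq_left ht.le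

theorem HasDerivAt.max_of_left_lt (hg : HasDerivAt g g' x) (hf : ContinuousAt f x)
    (hfg : f x < g x) : HasDerivAt (fun t => max (f t) (g t)) g' x := by
  simpa only [max_comm] using hg.max_of_right_lt hf hfg

end MaxDeriv

theorem exists_hasDerivAt_max_mul_one_sub_add (ε : ℝ) {s : ℝ} (hs0 : s ≠ 0) (hs1 : s ≠ 1) :
    ∃ d, HasDerivAt (fun t => max (t * (1 - t) + ε) ε) d s ∧ |d| ≤ 1 := by
  have hbranch : HasDerivAt (fun t => t * (1 - t) + ε) (1 - 2 * s) s :=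
    (((hasDerivAt_id' s).fun_mul ((hasDerivAt_id' s).const_sub 1)).add_const ε).congr_deriv
      (by ring)
  rcases lt_trichotomy (s * (1 - s)) 0 with hneg | hzero | hpos
  · exact ⟨0, (hasDerivAt_const s ε).max_of_left_lt hbranch.continuousAt (by linarith),
      by simp⟩
  · exact absurd hzero (mul_ne_zero hs0 (sub_ne_zero.mpr hs1.symm))
  · refine ⟨1 - 2 * s, hbranch.max_of_right_lt continuousAt_const (by linarith), ?_⟩
    rw [← sq_le_one_iff_abs_le_one]
    nlinarith

theorem regularized_potential_third_derivative_bound_general (ε : ℝ) (hε : 0 < ε)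
    (aε : ℝ) (haε : aε = (Real.sqrt (1 + 4 * ε) - 1) / 2)
    (με : ℝ → ℝ) (hμε : ∀ s : ℝ, με s = max (s * (1 - s) + ε) ε)
    (fε : ℝ → ℝ)
    (hf'' : ∀ s : ℝ, deriv (deriv fε) s = (1 + 2 * aε) / με s) :
    ∀ s : ℝ, s ≠ 0 → s ≠ 1 →
      DifferentiableAt ℝ (deriv (deriv fε)) s ∧
      |deriv (deriv (deriv fε)) s| * (με s) ^ 2 ≤ 1 + 2 * aε := by
  intro s hs0 hs1
  obtain ⟨d, hd, hd1⟩ := exists_hasDerivAt_max_mul_one_sub_add ε hs0 hs1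
  rw [← funext hμε] at hd
  have hμ : 0 < με s := hμε s ▸ lt_max_of_lt_right hε
  have hc : 0 ≤ 1 + 2 * aε := by rw [haε]; linarith [Real.sqrt_nonneg (1 + 4 * ε)]
  rw [funext hf'']
  refine ⟨(differentiableAt_const _).fun_div hd.differentiableAt hμ.ne', ?_⟩
  rw [deriv_const_div _ hd.differentiableAt hμ.ne', hd.deriv, abs_div, abs_of_pos (pow_pos hμ 2),
    div_mul_cancel₀ _ (pow_pos hμ 2).ne', neg_mul, abs_neg, abs_mul, abs_of_nonneg hc]
  exact mul_le_of_le_one_right hc hd1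

/-- bound on the third derivative of `f_ε` away from `0` and `1`:
`|f_ε'''(s)| · μ_ε(s)² ≤ 1 + 2a_ε`. -/
theorem regularized_potential_third_derivative_bound (ε : ℝ) (hε : 0 < ε)
    (aε : ℝ) (haε : aε = (Real.sqrt (1 + 4 * ε) - 1) / 2)
    (με : ℝ → ℝ) (hμε : ∀ s : ℝ, με s = max (s * (1 - s) + ε) ε)
    (fε : ℝ → ℝ) (hreg : ContDiff ℝ 2 fε)
    (hf'' : ∀ s : ℝ, deriv (deriv fε) s = (1 + 2 * aε) / με s)
    (hf' : deriv fε (1/2) = 0) (hf : fε (1/2) = - Real.log 2) :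
    ∀ s : ℝ, s ≠ 0 → s ≠ 1 →
      DifferentiableAt ℝ (deriv (deriv fε)) s ∧
      |deriv (deriv (deriv fε)) s| * (με s) ^ 2 ≤ 1 + 2 * aε :=
  regularized_potential_third_derivative_bound_general ε hε aε haε με hμε fε hf''
end

section
/- Fix ε > 0, a_ε = (√(1+4ε) − 1)/2, μ_ε(s) = max{s(1−s)+ε, ε}, and let f_ε be the regularized potential. Then for every s ∈ (0,1) one has |f_ε'(s)| ≤ |f'(s)|, where f'(s) = log(s/(1−s)) is the derivative of the logarithmic potential f(s) = s log s + (1−s) log(1−s). Equivalently, |log((a_ε + s)/(1 + a_ε − s))| ≤ |log(s/(1−s))| for every s ∈ (0,1). -/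
/-!
Since `a² + a = ε`, the regularized mobility factors on `[0, 1]` as `μ_ε(s) = (a + s)(1 + a - s)`,
so `s ↦ log ((a + s) / (1 + a - s))` has the same derivative `(1 + 2a) / μ_ε` as `f_ε'` there and,
like `f_ε'`, vanishes at `1/2`; hence it is `f_ε'` on `(0, 1)`. Adding `a ≥ 0` to both `s` and `1 - s` moves their ratio
towards `1`, which can only decrease `|log|`.
-/

open Real Set

lemma sqrt_one_add_four_mul_sub_one_div_two_pos {ε : ℝ} (hε : 0 < ε) :
    0 < (√(1 + 4 * ε) - 1) / 2 := by
  have : 1 < √(1 + 4 * ε) := (lt_sqrt zero_le_one).2 (by linarith)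
  linarith

lemma sqrt_one_add_four_mul_sub_one_div_two_sq_add_self {ε : ℝ} (hε : 0 ≤ ε) :
    ((√(1 + 4 * ε) - 1) / 2) ^ 2 + (√(1 + 4 * ε) - 1) / 2 = ε := by
  have := Real.sq_sqrt (show (0 : ℝ) ≤ 1 + 4 * ε by linarith)
  linear_combination this / 4

lemma max_mul_one_sub_add_eq_mul {a ε s : ℝ} (ha : a ^ 2 + a = ε) (hs : s ∈ Icc (0 : ℝ) 1) :
    max (s * (1 - s) + ε) ε = (a + s) * (1 + a - s) := by
  rw [max_eq_left (by nlinarith [hs.1, hs.2])]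
  linear_combination -ha

lemma hasDerivAt_log_div {a s : ℝ} (h₁ : 0 < a + s) (h₂ : 0 < 1 + a - s) :
    HasDerivAt (fun t ↦ log ((a + t) / (1 + a - t))) ((1 + 2 * a) / ((a + s) * (1 + a - s))) s := by
  have hquot : HasDerivAt (fun t ↦ (a + t) / (1 + a - t))
      ((1 * (1 + a - s) - (a + s) * (-1)) / (1 + a - s) ^ 2) s :=
    ((hasDerivAt_id s).const_add a).div ((hasDerivAt_id s).const_sub (1 + a)) h₂.ne'
  convert hquot.log (div_pos h₁ h₂).ne' using 1
  field_simp
  ring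

lemma abs_log_div_le_abs_log_div {a s : ℝ} (ha : 0 ≤ a) (hs : s ∈ Ioo (0 : ℝ) 1) :
    |log ((a + s) / (1 + a - s))| ≤ |log (s / (1 - s))| := by
  obtain ⟨hs₀, hs₁⟩ := hs
  have h₁ : 0 < a + s := by linarith
  have h₂ : 0 < 1 + a - s := by linarith
  have h₃ : 0 < 1 - s := by linarith
  rcases le_total s (1 / 2) with hs | hs
  · have hle : s / (1 - s) ≤ (a + s) / (1 + a - s) := by
      rw [div_le_div_iff₀ h₃ h₂]; nlinarith
    have hle_one : (a + s) / (1 + a - s) ≤ 1 := by rw [div_le_one h₂]; linarith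
    rw [abs_of_nonpos (log_nonpos (div_pos h₁ h₂).le hle_one),
      abs_of_nonpos (log_nonpos (div_pos hs₀ h₃).le (hle.trans hle_one))]
    exact neg_le_neg (log_le_log (div_pos hs₀ h₃) hle)
  · have hle : (a + s) / (1 + a - s) ≤ s / (1 - s) := by
      rw [div_le_div_iff₀ h₂ h₃]; nlinarith
    have one_le : 1 ≤ (a + s) / (1 + a - s) := by rw [le_div_iff₀ h₂]; linarith
    rw [abs_of_nonneg (log_nonneg one_le), abs_of_nonneg (log_nonneg (one_le.trans hle))]
    exact log_le_log (div_pos h₁ h₂) hle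

theorem regularized_potential_derivative_dominated_general (ε : ℝ) (hε : 0 < ε)
    (aε : ℝ) (haε : aε = (Real.sqrt (1 + 4 * ε) - 1) / 2)
    (με : ℝ → ℝ) (hμε : ∀ s : ℝ, με s = max (s * (1 - s) + ε) ε)
    (fε : ℝ → ℝ) (hreg : ContDiff ℝ 2 fε)
    (hf'' : ∀ s : ℝ, deriv (deriv fε) s = (1 + 2 * aε) / με s)
    (hf' : deriv fε (1/2) = 0) :
    ∀ s ∈ Set.Ioo (0:ℝ) 1,
      |deriv fε s| ≤ |Real.log (s / (1 - s))| ∧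
      |Real.log ((aε + s) / (1 + aε - s))| ≤ |Real.log (s / (1 - s))| := by
  have ha : 0 < aε := haε ▸ sqrt_one_add_four_mul_sub_one_div_two_pos hε
  have hsq : aε ^ 2 + aε = ε := haε ▸ sqrt_one_add_four_mul_sub_one_div_two_sq_add_self hε.le
  have hg : ∀ s ∈ Ioo (0 : ℝ) 1, HasDerivAt (fun t ↦ log ((aε + t) / (1 + aε - t)))
      ((1 + 2 * aε) / με s) s := fun s hs ↦ by
    rw [hμε, max_mul_one_sub_add_eq_mul hsq (Ioo_subset_Icc_self hs)]
    exact hasDerivAt_log_div (by linarith [hs.1]) (by linarith [hs.2])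
  have hf₁ : Differentiable ℝ (deriv fε) := hreg.differentiable_deriv_two
  have heq : EqOn (deriv fε) (fun t ↦ log ((aε + t) / (1 + aε - t))) (Ioo 0 1) :=
    isOpen_Ioo.eqOn_of_deriv_eq isPreconnected_Ioo hf₁.differentiableOn
      (fun s hs ↦ (hg s hs).differentiableAt.differentiableWithinAt)
      (fun s hs ↦ by rw [hf'', (hg s hs).deriv]) (by norm_num : (1 / 2 : ℝ) ∈ Ioo 0 1)
      (by rw [hf', show 1 + aε - 1 / 2 = aε + 1 / 2 by ring, div_self (by linarith), log_one])
  intro s hs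
  exact ⟨heq hs ▸ abs_log_div_le_abs_log_div ha.le hs, abs_log_div_le_abs_log_div ha.le hs⟩

/-- on `(0,1)` the regularized potential derivative is dominated by
the logarithmic potential derivative: `|f_ε'(s)| ≤ |f'(s)| = |log(s/(1−s))|`. -/
theorem regularized_potential_derivative_dominated (ε : ℝ) (hε : 0 < ε)
    (aε : ℝ) (haε : aε = (Real.sqrt (1 + 4 * ε) - 1) / 2)
    (με : ℝ → ℝ) (hμε : ∀ s : ℝ, με s = max (s * (1 - s) + ε) ε)
    (fε : ℝ → ℝ) (hreg : ContDiff ℝ 2 fε)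
    (hf'' : ∀ s : ℝ, deriv (deriv fε) s = (1 + 2 * aε) / με s)
    (hf' : deriv fε (1/2) = 0) (hf : fε (1/2) = - Real.log 2) :
    ∀ s ∈ Set.Ioo (0:ℝ) 1,
      |deriv fε s| ≤ |Real.log (s / (1 - s))| ∧
      |Real.log ((aε + s) / (1 + aε - s))| ≤ |Real.log (s / (1 - s))| :=
  regularized_potential_derivative_dominated_general ε hε aε haε με hμε fε hreg hf'' hf'
end

section
/- Let V, B, Y be real normed vector spaces, let i : V → B be a compact continuous linear map (the image under i of any bounded set is relatively compact in B), and let j : B → Y be an injective continuous linear map. Let T > 0 and let φ : [0,T] → V be a function such that there exists M ≥ 0 with ‖φ(t)‖_V ≤ M for every t ∈ [0,T], and such that the map t ↦ j(i(φ(t))) is continuous from [0,T] to Y. Then the map t ↦ i(φ(t)) is continuous from [0,T] to B. -/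
/-- if `i : V → B` is a compact linear embedding and `j : B → Y`
is a continuous injective linear embedding, then a function `φ : [0,T] → V`
which is bounded in `V` and such that `j ∘ i ∘ φ` is continuous into `Y` is
continuous into `B` (after composing with `i`). -/
theorem continuity_via_compact_embedding {V B Y : Type*}
    [NormedAddCommGroup V] [NormedSpace ℝ V]
    [NormedAddCommGroup B] [NormedSpace ℝ B]
    [NormedAddCommGroup Y] [NormedSpace ℝ Y]
    (i : V →L[ℝ] B)
    (hi : ∀ s : Set V, Bornology.IsBounded s → IsCompact (closure (i '' s)))
    (j : B →L[ℝ] Y) (hj : Function.Injective j)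
    (T : ℝ) (hT : 0 < T) (φ : ℝ → V) (M : ℝ)
    (hM : ∀ t ∈ Set.Icc (0:ℝ) T, ‖φ t‖ ≤ M)
    (hcont : ContinuousOn (fun t => j (i (φ t))) (Set.Icc (0:ℝ) T)) :
    ContinuousOn (fun t => i (φ t)) (Set.Icc (0:ℝ) T) := by
  set s : Set V := φ '' Set.Icc (0:ℝ) T with hs
  have hsb : Bornology.IsBounded s := by
    apply isBounded_iff_forall_norm_le.2 ⟨M, ?_⟩
    rintro x ⟨t, ht, rfl⟩
    exact hM t ht
  set K : Set B := closure (i '' s) with hK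
  have hKc : IsCompact K := hi s hsb
  haveI : CompactSpace K := isCompact_iff_compactSpace.mp hKc
  -- j restricted to K is a closed embedding, hence an embedding
  have hje : Topology.IsEmbedding (fun x : K => j (x : B)) :=
    (Continuous.isClosedEmbedding (j.continuous.comp continuous_subtype_val)
      (fun a b hab => Subtype.ext (hj hab))).toIsEmbedding
  have hmem : ∀ t ∈ Set.Icc (0:ℝ) T, i (φ t) ∈ K := fun t ht =>
    subset_closure ⟨φ t, ⟨t, ht, rfl⟩, rfl⟩
  -- clamp map
  set c : ℝ → ℝ := fun t => max 0 (min t T) with hc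
  have hcc : Continuous c := continuous_const.max (continuous_id.min continuous_const)
  have hcmem : ∀ t, c t ∈ Set.Icc (0:ℝ) T := fun t =>
    ⟨le_max_left _ _, max_le (hT.le) (min_le_right _ _)⟩
  have hceq : ∀ t ∈ Set.Icc (0:ℝ) T, c t = t := fun t ht => by
    simp only [hc]
    rw [min_eq_left ht.2, max_eq_right ht.1]
  set ψ : ℝ → K := fun t => ⟨i (φ (c t)), hmem (c t) (hcmem t)⟩ with hψ
  have hψc : Continuous ψ := by
    rw [hje.continuous_iff]
    exact hcont.comp_continuous hcc hcmem
  have : Continuous (fun t => (ψ t : B)) := continuous_subtype_val.comp hψc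
  refine (this.continuousOn).congr ?_
  intro t ht
  simp only [hψ, hceq t ht]
end
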